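/- arXiv:2601.04625 — 2 statements merged into one kernel-verified Lean document; each statement's English description precedes it below -/
import Mathlib

section
/- Let the prior on α > 0 be Stirling-gamma SG(a, b, n), i.e., p(α) ∝ α^{a−1}/(∏_{r=0}^{n−1}(α+r))^b, and let the conditional likelihood of a single observed partition Π_n of {1,…,n} with K blocks be proportional (in α) to α^{K}/∏_{r=0}^{n−1}(α+r). Then the posterior density of α given Π_n is Stirling-gamma SG(a + K, b + 1, n). -/
open MeasureTheory

/-- The unnormalized Stirling-gamma kernel of `SG(a, b, m)`. -/
noncomputable def sgKernel (a b : ℝ) (m : ℕ) (α : ℝ) : ℝ :=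
  α ^ (a - 1) / (∏ r ∈ Finset.range m, (α + r)) ^ b

/-- The Stirling-gamma `SG(a, b, m)` density. -/
noncomputable def sgPdf (a b : ℝ) (m : ℕ) (α : ℝ) : ℝ :=
  sgKernel a b m α / ∫ x in Set.Ioi (0:ℝ), sgKernel a b m x

/-- The `α`-dependent part of the Dirichlet-process partition likelihood for a partition
of `{1,…,n}` with `K` blocks. -/
noncomputable def dpPartitionLik (n K : ℕ) (α : ℝ) : ℝ :=
  α ^ (K : ℝ) / ∏ r ∈ Finset.range n, (α + r)


/-! The likelihood turns the `SG(a, b, n)` kernel pointwise into the `SG(a + K, b + 1, n)`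
kernel, so the posterior is that kernel up to a constant factor, which cancels on normalising.
What remains is that the prior's normalising constant is finite and positive: the rising
product `∏ (x + r)` is at least `x` near `0` and at least `x ^ n` at infinity, so the kernel is
dominated by `x ^ (a - b - 1)` near `0` and by `x ^ (a - 1 - n b)` at infinity, and these are
integrable there because `1 < a / b < n`. -/

open Finset Set

theorem setIntegral_pos_of_pos_on {X : Type*} [MeasurableSpace X] {μ : Measure X} {s : Set X}
    {f : X → ℝ} (hs : MeasurableSet s) (hμs : 0 < μ s) (hfi : IntegrableOn f s μ)
    (hf : ∀ x ∈ s, 0 < f x) : 0 < ∫ x in s, f x ∂μ := by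
  rw [setIntegral_pos_iff_support_of_nonneg_ae _ hfi]
  · exact hμs.trans_le (measure_mono fun x hx => ⟨(hf x hx).ne', hx⟩)
  · filter_upwards [ae_restrict_mem hs] with x hx using (hf x hx).le

theorem integrableOn_Ioi_zero_of_le_rpow {f : ℝ → ℝ} (hf : AEStronglyMeasurable f)
    {s t : ℝ} (hs : -1 < s) (ht : t < -1) (hf_zero : ∀ x ∈ Ioo (0 : ℝ) 1, ‖f x‖ ≤ x ^ s)
    (hf_top : ∀ x ∈ Ioi (1 : ℝ), ‖f x‖ ≤ x ^ t) : IntegrableOn f (Ioi 0) := by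
  have h_zero : IntegrableOn f (Ioo 0 1) := by
    refine Integrable.mono ((intervalIntegral.integrableOn_Ioo_rpow_iff one_pos).2 hs)
      hf.restrict ?_
    filter_upwards [ae_restrict_mem measurableSet_Ioo] with x hx
    exact (hf_zero x hx).trans (le_abs_self _)
  have h_top : IntegrableOn f (Ioi 1) := by
    refine Integrable.mono ((integrableOn_Ioi_rpow_iff one_pos).2 ht) hf.restrict ?_
    filter_upwards [ae_restrict_mem measurableSet_Ioi] with x hx
    exact (hf_top x hx).trans (le_abs_self _)
  rw [← Ioo_union_Ici_eq_Ioi one_pos, integrableOn_union,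
    integrableOn_Ici_iff_integrableOn_Ioi]
  exact ⟨h_zero, h_top⟩

section RisingProduct

variable {x : ℝ}

theorem prod_range_add_natCast_pos (hx : 0 < x) (n : ℕ) : 0 < ∏ r ∈ range n, (x + r) :=
  prod_pos fun r _ => by positivity

theorem pow_le_prod_range_add_natCast (hx : 0 ≤ x) (n : ℕ) :
    x ^ n ≤ ∏ r ∈ range n, (x + r) := by
  simpa using prod_le_prod (s := range n) (fun _ _ => hx) fun r _ =>
    le_add_of_nonneg_right r.cast_nonneg

theorem le_prod_range_add_natCast (hx : 0 ≤ x) {n : ℕ} (hn : n ≠ 0) :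
    x ≤ ∏ r ∈ range n, (x + r) := by
  obtain ⟨m, rfl⟩ := Nat.exists_eq_succ_of_ne_zero hn
  rw [prod_range_succ', Nat.cast_zero, add_zero]
  refine le_mul_of_one_le_left hx (one_le_prod fun r _ => ?_)
  push_cast
  linarith [r.cast_nonneg (α := ℝ)]

end RisingProduct

section StirlingGamma

variable {a b : ℝ} {n : ℕ} {x : ℝ}

theorem sgKernel_pos (hx : 0 < x) : 0 < sgKernel a b n x := by
  have := prod_range_add_natCast_pos hx n
  unfold sgKernel
  positivity

theorem measurable_sgKernel : Measurable (sgKernel a b n) := by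
  unfold sgKernel
  fun_prop

theorem sgKernel_le_rpow_sub_sub (hb : 0 ≤ b) (hn : n ≠ 0) (hx : 0 < x) :
    sgKernel a b n x ≤ x ^ (a - b - 1) := by
  calc sgKernel a b n x ≤ x ^ (a - 1) / x ^ b := by
        unfold sgKernel
        gcongr
        exact le_prod_range_add_natCast hx.le hn
    _ = x ^ (a - b - 1) := by rw [← Real.rpow_sub hx]; ring_nf

theorem sgKernel_le_rpow_sub_sub_mul (hb : 0 ≤ b) (hx : 0 < x) :
    sgKernel a b n x ≤ x ^ (a - 1 - n * b) := by
  calc sgKernel a b n x ≤ x ^ (a - 1) / x ^ (n * b) := by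
        unfold sgKernel
        rw [Real.rpow_mul hx.le, Real.rpow_natCast]
        gcongr
        exact pow_le_prod_range_add_natCast hx.le n
    _ = x ^ (a - 1 - n * b) := by rw [← Real.rpow_sub hx]

theorem integrableOn_sgKernel (hb : 0 < b) (hab : b < a) (han : a < n * b) :
    IntegrableOn (sgKernel a b n) (Ioi 0) := by
  have hn : n ≠ 0 := by
    rintro rfl
    rw [Nat.cast_zero, zero_mul] at han
    linarith
  refine integrableOn_Ioi_zero_of_le_rpow measurable_sgKernel.aestronglyMeasurable
    (s := a - b - 1) (t := a - 1 - n * b) (by linarith) (by linarith) ?_ ?_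
  all_goals
    intro x hx
    have hx0 : 0 < x := by first | exact hx.1 | exact one_pos.trans hx
    rw [Real.norm_of_nonneg (sgKernel_pos hx0).le]
  · exact sgKernel_le_rpow_sub_sub hb.le hn hx0
  · exact sgKernel_le_rpow_sub_sub_mul hb.le hx0

theorem integral_sgKernel_pos (hb : 0 < b) (hab : b < a) (han : a < n * b) :
    0 < ∫ x in Ioi 0, sgKernel a b n x :=
  setIntegral_pos_of_pos_on measurableSet_Ioi (by simp) (integrableOn_sgKernel hb hab han)
    fun _ hx => sgKernel_pos hx

theorem sgKernel_mul_dpPartitionLik (K : ℕ) (hx : 0 < x) :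
    sgKernel a b n x * dpPartitionLik n K x = sgKernel (a + K) (b + 1) n x := by
  unfold sgKernel dpPartitionLik
  rw [div_mul_div_comm, ← Real.rpow_add hx,
    ← Real.rpow_add_one (prod_range_add_natCast_pos hx n).ne']
  ring_nf

end StirlingGamma

theorem stirling_gamma_conjugacy_general
    (n K : ℕ)
    (a b : ℝ) (hb : 0 < b) (hab1 : 1 < a / b) (habn : a / b < n)
    (α : ℝ) (hα : 0 < α) :
    (sgPdf a b n α * dpPartitionLik n K α) /
        (∫ x in Set.Ioi (0:ℝ), sgPdf a b n x * dpPartitionLik n K x) =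
      sgPdf (a + K) (b + 1) n α := by
  have hab : b < a := by rwa [lt_div_iff₀ hb, one_mul] at hab1
  have hZ := integral_sgKernel_pos hb hab ((div_lt_iff₀ hb).1 habn)
  set Z := ∫ x in Ioi 0, sgKernel a b n x
  have posterior : ∀ x ∈ Ioi (0 : ℝ),
      sgPdf a b n x * dpPartitionLik n K x = sgKernel (a + K) (b + 1) n x / Z := fun x hx => by
    rw [sgPdf, div_mul_eq_mul_div, sgKernel_mul_dpPartitionLik K hx]
  rw [setIntegral_congr_fun measurableSet_Ioi posterior, integral_div, posterior α hα, sgPdf,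
    div_div_div_cancel_right₀ hZ.ne']

/-- Conjugacy of the Stirling-gamma prior: with prior `SG(a, b, n)` on `α` and a single
observed partition of `{1,…,n}` with `K` blocks, the posterior density of `α` is the
`SG(a + K, b + 1, n)` density. -/
theorem stirling_gamma_conjugacy
    (n K : ℕ) (hn : 1 ≤ n) (hK1 : 1 ≤ K) (hKn : K ≤ n)
    (a b : ℝ) (ha : 0 < a) (hb : 0 < b) (hab1 : 1 < a / b) (habn : a / b < n)
    (α : ℝ) (hα : 0 < α) :
    (sgPdf a b n α * dpPartitionLik n K α) /
        (∫ x in Set.Ioi (0:ℝ), sgPdf a b n x * dpPartitionLik n K x) =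
      sgPdf (a + K) (b + 1) n α :=
  stirling_gamma_conjugacy_general n K a b hb hab1 habn α hα
end

section
/- Let the prior on α be Stirling-gamma SG(a, b, n) and suppose T conditionally independent partitions Π_{n,1}, …, Π_{n,T} of {1,…,n} are observed, each with Dirichlet-process partition likelihood proportional (in α) to α^{K_t}/∏_{r=0}^{n−1}(α+r), where K_t is the number of blocks of Π_{n,t}. Then the posterior of α is Stirling-gamma SG(a + ∑_{t=1}^{T} K_t, b + T, n). -/
open MeasureTheory

/-!
The likelihood `α ^ K / ∏_{r<n} (α + r)` of one partition has the same shape as the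
Stirling-gamma kernel, so multiplying the prior kernel by `T` of them only shifts `a` by
`∑ K_t` and `b` by `T`. Bayes' formula then identifies the posterior with the normalized
shifted kernel, provided the prior normalizing constant is positive and finite: near `0`
the kernel behaves like `α ^ (a - 1 - b)`, near `∞` like `α ^ (a - 1 - n b)`, and
`b < a < n b` makes both integrable.
-/

lemma prod_add_natCast_pos (n : ℕ) {x : ℝ} (hx : 0 < x) : 0 < ∏ r ∈ Finset.range n, (x + r) :=
  Finset.prod_pos fun _ _ => by positivity

namespace sgKernel

lemma pos (a b : ℝ) (n : ℕ) {x : ℝ} (hx : 0 < x) : 0 < sgKernel a b n x :=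
  div_pos (Real.rpow_pos_of_pos hx _) (Real.rpow_pos_of_pos (prod_add_natCast_pos n hx) _)

lemma continuousOn (a b : ℝ) (n : ℕ) : ContinuousOn (sgKernel a b n) (Set.Ioi 0) := by
  have hprod : Continuous fun x : ℝ => ∏ r ∈ Finset.range n, (x + r) := by fun_prop
  refine ContinuousOn.div (fun x hx => ?_) (hprod.continuousOn.rpow_const fun x hx => ?_)
    fun x hx => (Real.rpow_pos_of_pos (prod_add_natCast_pos n hx) _).ne'
  · exact (Real.continuousAt_rpow_const x _ (Or.inl (ne_of_gt hx))).continuousWithinAt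
  · exact Or.inl (prod_add_natCast_pos n hx).ne'

lemma mul_dpPartitionLik (a b : ℝ) (n K : ℕ) {x : ℝ} (hx : 0 < x) :
    sgKernel a b n x * dpPartitionLik n K x = sgKernel (a + K) (b + 1) n x := by
  have hprod := (prod_add_natCast_pos n hx).ne'
  rw [sgKernel, sgKernel, dpPartitionLik, div_mul_div_comm, ← Real.rpow_add hx,
    Real.rpow_add_one hprod]
  ring_nf

lemma mul_prod_dpPartitionLik (a b : ℝ) (n T : ℕ) (K : ℕ → ℕ) {x : ℝ} (hx : 0 < x) :
    sgKernel a b n x * ∏ t ∈ Finset.range T, dpPartitionLik n (K t) x =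
      sgKernel (a + ∑ t ∈ Finset.range T, K t) (b + T) n x := by
  induction T with
  | zero => simp
  | succ T ih =>
    rw [Finset.prod_range_succ, ← mul_assoc, ih, mul_dpPartitionLik _ _ _ _ hx,
      Finset.sum_range_succ]
    push_cast
    ring_nf

lemma le_rpow (a : ℝ) {b : ℝ} (hb : 0 ≤ b) (n : ℕ) {x : ℝ} (hx : 0 < x) :
    sgKernel a b n x ≤ x ^ (a - 1 - n * b) := by
  have hprod : x ^ n ≤ ∏ r ∈ Finset.range n, (x + r) :=
    calc x ^ n = ∏ _r ∈ Finset.range n, x := by simp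
      _ ≤ _ := Finset.prod_le_prod (fun _ _ => hx.le) fun r _ => by simp
  calc sgKernel a b n x ≤ x ^ (a - 1) / (x ^ n) ^ b :=
        div_le_div_of_nonneg_left (by positivity) (by positivity)
          (Real.rpow_le_rpow (by positivity) hprod hb)
    _ = x ^ (a - 1 - n * b) := by
        rw [← Real.rpow_natCast, ← Real.rpow_mul hx.le, Real.rpow_sub hx (a - 1)]

lemma succ_le_rpow_div (a : ℝ) {b : ℝ} (hb : 0 ≤ b) (m : ℕ) {x : ℝ} (hx : 0 < x) :
    sgKernel a b (m + 1) x ≤ x ^ (a - 1 - b) / (m.factorial : ℝ) ^ b := by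
  have hprod : x * m.factorial ≤ ∏ r ∈ Finset.range (m + 1), (x + r) := by
    rw [Finset.prod_range_succ', Nat.cast_zero, add_zero, mul_comm x,
      ← Finset.prod_range_add_one_eq_factorial, Nat.cast_prod]
    refine mul_le_mul_of_nonneg_right (Finset.prod_le_prod (fun _ _ => by positivity)
      fun r _ => ?_) hx.le
    push_cast
    linarith
  calc sgKernel a b (m + 1) x ≤ x ^ (a - 1) / (x * m.factorial) ^ b :=
        div_le_div_of_nonneg_left (by positivity) (by positivity)
          (Real.rpow_le_rpow (by positivity) hprod hb)
    _ = x ^ (a - 1 - b) / (m.factorial : ℝ) ^ b := by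
        rw [Real.mul_rpow hx.le (by positivity), ← div_div, Real.rpow_sub hx (a - 1)]

lemma integrableOn_of_le {a b : ℝ} {n : ℕ} {s : Set ℝ} (hs : MeasurableSet s)
    (hs0 : s ⊆ Set.Ioi 0) {g : ℝ → ℝ} (hg : IntegrableOn g s)
    (hle : ∀ x ∈ s, sgKernel a b n x ≤ g x) : IntegrableOn (sgKernel a b n) s := by
  refine hg.mono' (((continuousOn a b n).mono hs0).aestronglyMeasurable hs) ?_
  filter_upwards [ae_restrict_mem hs] with x hx
  rw [Real.norm_of_nonneg (pos a b n (hs0 hx)).le]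
  exact hle x hx

lemma integrableOn_Ioi {a b : ℝ} {n : ℕ} (hb : 0 < b) (hba : b < a) (han : a < n * b) :
    IntegrableOn (sgKernel a b n) (Set.Ioi 0) := by
  obtain ⟨m, rfl⟩ : ∃ m, n = m + 1 :=
    Nat.exists_eq_succ_of_ne_zero fun h => by subst h; rw [Nat.cast_zero, zero_mul] at han; linarith
  have h_zero : IntegrableOn (sgKernel a b (m + 1)) (Set.Ioc 0 1) := by
    refine integrableOn_of_le measurableSet_Ioc Set.Ioc_subset_Ioi_self ?_
      fun x hx => succ_le_rpow_div a hb.le m hx.1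
    rw [integrableOn_Ioc_iff_integrableOn_Ioo]
    exact ((intervalIntegral.integrableOn_Ioo_rpow_iff one_pos).2 (by linarith)).div_const _
  have h_infty : IntegrableOn (sgKernel a b (m + 1)) (Set.Ioi 1) := by
    refine integrableOn_of_le measurableSet_Ioi (Set.Ioi_subset_Ioi zero_le_one) ?_
      fun x hx => le_rpow a hb.le _ (zero_lt_one.trans hx)
    exact (integrableOn_Ioi_rpow_iff one_pos).2 (by linarith)
  simpa only [Set.Ioc_union_Ioi_eq_Ioi zero_le_one] using h_zero.union h_infty

lemma integral_Ioi_pos {a b : ℝ} {n : ℕ} (hb : 0 < b) (hba : b < a) (han : a < n * b) :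
    0 < ∫ x in Set.Ioi 0, sgKernel a b n x := by
  have hnonneg : 0 ≤ᵐ[volume.restrict (Set.Ioi 0)] sgKernel a b n := by
    filter_upwards [ae_restrict_mem measurableSet_Ioi] with x hx
    exact (pos a b n hx).le
  rw [setIntegral_pos_iff_support_of_nonneg_ae hnonneg (integrableOn_Ioi hb hba han)]
  have hsupp : Set.Ioi 0 ⊆ Function.support (sgKernel a b n) ∩ Set.Ioi 0 :=
    fun x hx => ⟨(pos a b n hx).ne', hx⟩
  exact (by simp : (0 : ENNReal) < volume (Set.Ioi (0:ℝ))).trans_le (measure_mono hsupp)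

end sgKernel

theorem stirling_gamma_conjugacy_T_partitions_general
    (n T : ℕ) (K : ℕ → ℕ)
    (a b : ℝ) (hb : 0 < b) (hab1 : 1 < a / b) (habn : a / b < n)
    (α : ℝ) (hα : 0 < α) :
    (sgPdf a b n α * ∏ t ∈ Finset.range T, dpPartitionLik n (K t) α) /
        (∫ x in Set.Ioi (0:ℝ), sgPdf a b n x * ∏ t ∈ Finset.range T, dpPartitionLik n (K t) x) =
      sgPdf (a + ∑ t ∈ Finset.range T, K t) (b + T) n α := by
  have hba : b < a := by simpa using (lt_div_iff₀ hb).1 hab1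
  have han : a < n * b := (div_lt_iff₀ hb).1 habn
  have hC := sgKernel.integral_Ioi_pos hb hba han
  have hpost : ∀ x ∈ Set.Ioi (0:ℝ),
      sgPdf a b n x * ∏ t ∈ Finset.range T, dpPartitionLik n (K t) x =
        sgKernel (a + ∑ t ∈ Finset.range T, K t) (b + T) n x /
          ∫ y in Set.Ioi 0, sgKernel a b n y := fun x hx => by
    rw [sgPdf, div_mul_eq_mul_div, sgKernel.mul_prod_dpPartitionLik a b n T K hx]
  rw [hpost α hα, setIntegral_congr_fun measurableSet_Ioi hpost, integral_div,
    div_div_div_cancel_right₀ hC.ne', sgPdf]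

/-- Full conditional of `α` under the AR-LB-SG process: with prior `SG(a, b, n)` and `T`
conditionally independent partitions of `{1,…,n}` with `K_1, …, K_T` blocks (joint
likelihood the product of the individual partition likelihoods), the posterior of `α` is
`SG(a + ∑_t K_t, b + T, n)`. -/
theorem stirling_gamma_conjugacy_T_partitions
    (n T : ℕ) (hn : 1 ≤ n) (hT : 1 ≤ T) (K : ℕ → ℕ)
    (hK1 : ∀ t < T, 1 ≤ K t) (hKn : ∀ t < T, K t ≤ n)
    (a b : ℝ) (ha : 0 < a) (hb : 0 < b) (hab1 : 1 < a / b) (habn : a / b < n)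
    (α : ℝ) (hα : 0 < α) :
    (sgPdf a b n α * ∏ t ∈ Finset.range T, dpPartitionLik n (K t) α) /
        (∫ x in Set.Ioi (0:ℝ), sgPdf a b n x * ∏ t ∈ Finset.range T, dpPartitionLik n (K t) x) =
      sgPdf (a + ∑ t ∈ Finset.range T, K t) (b + T) n α :=
  stirling_gamma_conjugacy_T_partitions_general n T K a b hb hab1 habn α hα
end
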